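/- Let G = G₁ ∪ G₂ be a directed graph with finitely many vertices, sharing n vertices, no shared edges, with no edge of G₂ entering G₁ and G₂^0 = G^0. Then C*(G) ≅ (C*(G₁) ⊕ ℂ) *_{ℂ^{n+1}} C*(G₂), where the amalgamation is via the unital embeddings θ₁(λ₁,...,λ_{n+1}) = (Σ_{i=1}^n λᵢ p̄ᵢ, λ_{n+1}) into C*(G₁) ⊕ ℂ and θ₂(λ₁,...,λ_{n+1}) = Σ_{i=1}^n λᵢ p̿ᵢ + λ_{n+1} Σ_β p̿_β into C*(G₂), where p₁,...,p_n are the shared vertices and the p_β are vertices of G₂ not in G₁. -/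

import Mathlib

open scoped Matrix.Norms.L2Operator

/-- A unital Cuntz–Krieger `G`-family in a unital complex star algebra `A`, for
a finite directed graph `G = (V, E, s, r)`: mutually orthogonal self-adjoint
idempotents `p v` summing to `1`, and elements `se e` satisfying the
Cuntz–Krieger relations. -/
structure CKFamily (V E : Type) [Fintype V] [Fintype E] [DecidableEq V]
    (s r : E → V) (A : Type*) [Ring A] [Algebra ℂ A] [StarRing A] where
  p : V → A
  se : E → A
  proj_idem : ∀ v, p v * p v = p v
  proj_star : ∀ v, star (p v) = p v
  orth : ∀ v w, v ≠ w → p v * p w = 0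
  ck1 : ∀ e, star (se e) * se e = p (s e)
  ck2 : ∀ v, (∃ e, r e = v) →
    p v = ∑ e ∈ Finset.univ.filter (fun e => r e = v), se e * star (se e)
  sum_p : ∑ v, p v = 1

/-- The C*-algebra `A`, equipped with the Cuntz–Krieger family `F`, is the
graph C*-algebra `C*(G)`: it satisfies the universal property that every
Cuntz–Krieger `G`-family in a unital C*-algebra `B` is the image of `F` under a
unique unital *-homomorphism. -/
def IsUniversalCKFamily (V E : Type) [Fintype V] [Fintype E] [DecidableEq V]
    (s r : E → V) (A : Type*) [Ring A] [Algebra ℂ A] [StarRing A]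
    (F : CKFamily V E s r A) : Prop :=
  ∀ (B : Type) [NormedRing B] [StarRing B] [CStarRing B] [NormedAlgebra ℂ B]
    [StarModule ℂ B] [CompleteSpace B] (Q : CKFamily V E s r B),
    ∃! φ : A →⋆ₐ[ℂ] B, (∀ v, φ (F.p v) = Q.p v) ∧ (∀ e, φ (F.se e) = Q.se e)

/-- A cycle of length `n` in a directed graph. -/
def IsGraphCycle {V E : Type*} (s r : E → V) (n : ℕ) (c : ZMod n → E) : Prop :=
  0 < n ∧ ∀ i : ZMod n, s (c (i + 1)) = r (c i)

/-- `(C, i₁, i₂)` is the unital full amalgamated free product of `A₁` and `A₂`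
over `D` (along the unital embeddings `θ₁, θ₂`): the canonical maps satisfy
`i₁ ∘ θ₁ = i₂ ∘ θ₂`, and every pair of unital *-homomorphisms into a unital
C*-algebra agreeing on `D` factors uniquely through `C`. -/
def IsAmalgamatedFreeProduct
    {D A₁ A₂ C : Type*}
    [Ring D] [Algebra ℂ D] [StarRing D] [Ring A₁] [Algebra ℂ A₁] [StarRing A₁]
    [Ring A₂] [Algebra ℂ A₂] [StarRing A₂] [Ring C] [Algebra ℂ C] [StarRing C]
    (θ₁ : D →⋆ₐ[ℂ] A₁) (θ₂ : D →⋆ₐ[ℂ] A₂)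
    (i₁ : A₁ →⋆ₐ[ℂ] C) (i₂ : A₂ →⋆ₐ[ℂ] C) : Prop :=
  i₁.comp θ₁ = i₂.comp θ₂ ∧
  ∀ (B : Type) [NormedRing B] [StarRing B] [CStarRing B] [NormedAlgebra ℂ B]
    [StarModule ℂ B] [CompleteSpace B]
    (π₁ : A₁ →⋆ₐ[ℂ] B) (π₂ : A₂ →⋆ₐ[ℂ] B), π₁.comp θ₁ = π₂.comp θ₂ →
      ∃! π : C →⋆ₐ[ℂ] B, π.comp i₁ = π₁ ∧ π.comp i₂ = π₂

/-!
A *-homomorphism `π` from the amalgamated free product to `C*(G)` is glued from two legs given by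
universal properties. The leg on `C*(G₂)` sends the generators to the vertex projections of `G`
and the edges of `G₂`: since no edge of `G₁` ends where an edge of `G₂` does, the Cuntz–Krieger
sums of `G₂` are those of `G`. The leg on `C*(G₁) ⊕ ℂ` maps `C*(G₁)` unitally into the corner
`q C*(G) q`, `q = ∑_{v ∈ G₁⁰} p_v`, and sends `(0, 1)` to `1 - q`; both legs then agree on
`ℂ^{n+1}`. Conversely, the vertex projections of `C*(G₂)` together with the edges of `C*(G₁)` and
of `C*(G₂)` form a Cuntz–Krieger `G`-family in the amalgamated free product, because the
amalgamation identifies the vertex projections of `G₁` in both factors; this gives `ρ`. The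
composites `π ∘ ρ` and `ρ ∘ π` fix the generators, so they are the identity by uniqueness in the
universal properties; for the factor `C*(G₁)`, whose unit is not sent to `1`, uniqueness is again
applied in a corner.
-/

namespace IsStarProjection

variable {B : Type*} [NormedRing B] [StarRing B] {q : B}

def Corner (_ : IsStarProjection q) : Type _ := {x : B // q * x = x ∧ x * q = x}

namespace Corner

variable {hq : IsStarProjection q}

instance : Zero hq.Corner := ⟨⟨0, mul_zero q, zero_mul q⟩⟩
instance : One hq.Corner := ⟨⟨q, hq.isIdempotentElem.eq, hq.isIdempotentElem.eq⟩⟩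
instance : Add hq.Corner :=
  ⟨fun x y => ⟨x.1 + y.1, by rw [mul_add, x.2.1, y.2.1], by rw [add_mul, x.2.2, y.2.2]⟩⟩
instance : Neg hq.Corner := ⟨fun x => ⟨-x.1, by rw [mul_neg, x.2.1], by rw [neg_mul, x.2.2]⟩⟩
instance : Sub hq.Corner :=
  ⟨fun x y => ⟨x.1 - y.1, by rw [mul_sub, x.2.1, y.2.1], by rw [sub_mul, x.2.2, y.2.2]⟩⟩
instance : Mul hq.Corner :=
  ⟨fun x y => ⟨x.1 * y.1, by rw [← mul_assoc, x.2.1], by rw [mul_assoc, y.2.2]⟩⟩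
instance {S : Type*} [SMul S B] [SMulCommClass S B B] [IsScalarTower S B B] :
    SMul S hq.Corner :=
  ⟨fun c x => ⟨c • x.1, by rw [mul_smul_comm, x.2.1], by rw [smul_mul_assoc, x.2.2]⟩⟩
instance : Star hq.Corner :=
  ⟨fun x => ⟨star x.1, by simpa [hq.isSelfAdjoint.star_eq] using congrArg star x.2.2,
    by simpa [hq.isSelfAdjoint.star_eq] using congrArg star x.2.1⟩⟩

def val : hq.Corner → B := Subtype.val

def mk (x : B) (h₁ : q * x = x) (h₂ : x * q = x) : hq.Corner := ⟨x, h₁, h₂⟩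

lemma val_injective : Function.Injective (val (hq := hq)) := Subtype.val_injective

@[ext] lemma ext {x y : hq.Corner} (h : val x = val y) : x = y := val_injective h

@[simp] lemma val_mk (x : B) (h₁ : q * x = x) (h₂ : x * q = x) :
    val (mk x h₁ h₂ : hq.Corner) = x := rfl
@[simp] lemma val_zero : val (0 : hq.Corner) = 0 := rfl
@[simp] lemma val_one : val (1 : hq.Corner) = q := rfl
@[simp] lemma val_mul (x y : hq.Corner) : val (x * y) = val x * val y := rfl
@[simp] lemma val_star (x : hq.Corner) : val (star x) = star (val x) := rfl

instance : Ring hq.Corner where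
  __ : NonUnitalRing hq.Corner := val_injective.nonUnitalRing _ rfl (fun _ _ => rfl)
    (fun _ _ => rfl) (fun _ => rfl) (fun _ _ => rfl) (fun _ _ => rfl) (fun _ _ => rfl)
  one_mul x := Subtype.ext x.2.1
  mul_one x := Subtype.ext x.2.2

def valAddMonoidHom : hq.Corner →+ B := AddMonoidHom.mk' val fun _ _ => rfl

@[simp] lemma val_sum {ι : Type*} (t : Finset ι) (x : ι → hq.Corner) :
    val (∑ i ∈ t, x i) = ∑ i ∈ t, val (x i) :=
  map_sum valAddMonoidHom x t

instance : StarRing hq.Corner where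
  star_involutive x := Subtype.ext (star_star x.1)
  star_mul x y := Subtype.ext (star_mul x.1 y.1)
  star_add x y := Subtype.ext (star_add x.1 y.1)

section Algebra

variable {R : Type*} [CommSemiring R] [Algebra R B]

noncomputable instance : Module R hq.Corner :=
  val_injective.module R valAddMonoidHom fun _ _ => rfl

noncomputable instance : Algebra R hq.Corner :=
  Algebra.ofModule (fun c x y => Subtype.ext (smul_mul_assoc c x.1 y.1))
    (fun c x y => Subtype.ext (mul_smul_comm c x.1 y.1))

instance [Star R] [StarModule R B] : StarModule R hq.Corner :=
  ⟨fun c x => Subtype.ext (star_smul c x.1)⟩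

def subtype : hq.Corner →⋆ₙₐ[R] B where
  toFun := val
  map_smul' _ _ := rfl
  map_zero' := rfl
  map_add' _ _ := rfl
  map_mul' _ _ := rfl
  map_star' _ := rfl

end Algebra

noncomputable instance : NormedRing hq.Corner where
  norm x := ‖x.1‖
  __ : MetricSpace hq.Corner := Subtype.metricSpace
  dist_eq x y := by
    change dist x.1 y.1 = ‖-x.1 + y.1‖
    rw [dist_eq_norm, neg_add_eq_sub, norm_sub_rev]
  norm_mul_le x y := norm_mul_le x.1 y.1

instance [CStarRing B] : CStarRing hq.Corner :=
  ⟨fun x => (CStarRing.norm_star_mul_self (x := x.1)).ge⟩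

noncomputable instance {𝕜 : Type*} [NormedField 𝕜] [NormedAlgebra 𝕜 B] :
    NormedAlgebra 𝕜 hq.Corner where
  norm_smul_le c x := norm_smul_le c x.1

instance [CompleteSpace B] : CompleteSpace hq.Corner :=
  ((isClosed_eq (continuous_const.mul continuous_id) continuous_id).inter
    (isClosed_eq (continuous_id.mul continuous_const) continuous_id)).completeSpace_coe

end Corner
end IsStarProjection

lemma mul_star_mul_self_of_isIdempotentElem {B : Type*} [NonUnitalNormedRing B] [StarRing B]
    [CStarRing B] {a : B} (h : IsIdempotentElem (star a * a)) : a * (star a * a) = a := by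
  have h' : star a * (a * (star a * a)) = star a * a := by simpa [mul_assoc] using h.eq
  have : star (a * (star a * a) - a) * (a * (star a * a) - a) = 0 := by
    simp only [star_sub, star_mul, star_star, sub_mul, mul_sub, mul_assoc, h']
    abel
  rwa [CStarRing.star_mul_self_eq_zero_iff, sub_eq_zero] at this

-- `(1 - p) p (1 - p) = 0` is the sum of the positive elements `(1 - p) aⱼ aⱼ* (1 - p)`,
-- so each of them vanishes.
lemma mul_eq_self_of_eq_sum_mul_star {B : Type*} [NormedRing B] [StarRing B] [CStarRing B]
    [NormedAlgebra ℂ B] [StarModule ℂ B] [CompleteSpace B] {ι : Type*} {t : Finset ι}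
    {a : ι → B} {p : B} (hp : IsStarProjection p) (hsum : p = ∑ i ∈ t, a i * star (a i))
    {i : ι} (hi : i ∈ t) : p * a i = a i := by
  let _ : CStarAlgebra B := {}
  let _ := CStarAlgebra.spectralOrder B
  have := CStarAlgebra.spectralOrderedRing B
  have hsq : ∀ j, (1 - p) * (a j * star (a j)) * (1 - p) =
      star (star (a j) * (1 - p)) * (star (a j) * (1 - p)) := fun j => by
    simp only [star_mul, star_star, star_sub, star_one, hp.isSelfAdjoint.star_eq, mul_assoc]
  have hzero : ∑ j ∈ t, star (star (a j) * (1 - p)) * (star (a j) * (1 - p)) = 0 := by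
    rw [← Finset.sum_congr rfl fun j _ => hsq j, ← Finset.sum_mul, ← Finset.mul_sum, ← hsum,
      sub_mul, one_mul, hp.isIdempotentElem.eq, sub_self, zero_mul]
  have := (Finset.sum_eq_zero_iff_of_nonneg fun j _ => star_mul_self_nonneg _).1 hzero i hi
  rw [CStarRing.star_mul_self_eq_zero_iff] at this
  have h := congrArg star this
  rw [star_mul, star_star, star_sub, star_one, hp.isSelfAdjoint.star_eq, star_zero, sub_mul,
    one_mul, sub_eq_zero] at h
  exact h.symm

section SumElim

variable {E₁ E₂ α M : Type*} [Fintype E₁] [Fintype E₂] [DecidableEq α] [AddCommMonoid M]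
  {f₁ : E₁ → α} {f₂ : E₂ → α}

lemma Finset.sum_filter_sumElim_eq_left (hf : ∀ e₁ e₂, f₁ e₁ ≠ f₂ e₂) {a : α}
    (ha : ∃ e, f₁ e = a) (g : E₁ ⊕ E₂ → M) :
    ∑ e ∈ Finset.univ.filter (fun e => Sum.elim f₁ f₂ e = a), g e =
      ∑ e ∈ Finset.univ.filter (fun e => f₁ e = a), g (.inl e) := by
  obtain ⟨e₁, rfl⟩ := ha
  simp only [Finset.sum_filter, Fintype.sum_sum_type, Sum.elim_inl, Sum.elim_inr,
    fun e₂ => (hf e₁ e₂).symm, if_false, Finset.sum_const_zero, add_zero]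
  rfl

lemma Finset.sum_filter_sumElim_eq_right (hf : ∀ e₁ e₂, f₁ e₁ ≠ f₂ e₂) {a : α}
    (ha : ∃ e, f₂ e = a) (g : E₁ ⊕ E₂ → M) :
    ∑ e ∈ Finset.univ.filter (fun e => Sum.elim f₁ f₂ e = a), g e =
      ∑ e ∈ Finset.univ.filter (fun e => f₂ e = a), g (.inr e) := by
  obtain ⟨e₂, rfl⟩ := ha
  simp only [Finset.sum_filter, Fintype.sum_sum_type, Sum.elim_inl, Sum.elim_inr, hf, if_false,
    Finset.sum_const_zero, zero_add]
  rfl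

end SumElim

namespace CKFamily

variable {V E : Type} [Fintype V] [Fintype E] [DecidableEq V] {s r : E → V}

section Algebra

variable {A : Type*} [Ring A] [Algebra ℂ A] [StarRing A] (Q : CKFamily V E s r A)

lemma orthogonalIdempotents : OrthogonalIdempotents Q.p :=
  ⟨Q.proj_idem, fun _ _ => Q.orth _ _⟩

lemma isStarProjection_sum (S : Finset V) : IsStarProjection (∑ v ∈ S, Q.p v) :=
  ⟨Q.orthogonalIdempotents.isIdempotentElem_sum,
    by simp only [IsSelfAdjoint, star_sum, Q.proj_star]⟩

lemma one_sub_sum_filter (P : V → Prop) [DecidablePred P] :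
    1 - ∑ v ∈ Finset.univ.filter P, Q.p v = ∑ v ∈ Finset.univ.filter (fun v => ¬ P v), Q.p v := by
  rw [← Q.sum_p, ← Finset.sum_filter_add_sum_filter_not Finset.univ P, add_sub_cancel_left]

lemma sum_p_mul_of_mem {S : Finset V} {w : V} (hw : w ∈ S) {x : A} (hx : Q.p w * x = x) :
    (∑ v ∈ S, Q.p v) * x = x := by
  rw [← hx, ← mul_assoc, Finset.sum_mul,
    Finset.sum_eq_single_of_mem w hw fun v _ h => Q.orth v w h, Q.proj_idem]

lemma mul_sum_p_of_mem {S : Finset V} {w : V} (hw : w ∈ S) {x : A} (hx : x * Q.p w = x) :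
    x * ∑ v ∈ S, Q.p v = x := by
  rw [← hx, mul_assoc, Q.orthogonalIdempotents.mul_sum_of_mem hw]

lemma map_p_eq_sum {B G : Type*} [Ring B] [StarRing B] [FunLike G A B]
    [NonUnitalRingHomClass G A B] [StarHomClass G A B] (f : G) {v : V} (hv : ∃ e, r e = v) :
    f (Q.p v) = ∑ e ∈ Finset.univ.filter (fun e => r e = v), f (Q.se e) * star (f (Q.se e)) := by
  simp only [Q.ck2 v hv, map_sum, map_mul, map_star]

def map {B : Type*} [Ring B] [Algebra ℂ B] [StarRing B] (f : A →⋆ₐ[ℂ] B) :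
    CKFamily V E s r B where
  p v := f (Q.p v)
  se e := f (Q.se e)
  proj_idem v := by rw [← map_mul, Q.proj_idem]
  proj_star v := by rw [← map_star, Q.proj_star]
  orth v w h := by rw [← map_mul, Q.orth v w h, map_zero]
  ck1 e := by rw [← map_star, ← map_mul, Q.ck1]
  ck2 _ := Q.map_p_eq_sum f
  sum_p := by rw [← map_sum, Q.sum_p, map_one]

end Algebra

section CStarAlgebra

variable {B : Type*} [NormedRing B] [StarRing B] [CStarRing B] [NormedAlgebra ℂ B]
  (Q : CKFamily V E s r B)

lemma se_mul_p (e : E) : Q.se e * Q.p (s e) = Q.se e := by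
  rw [← Q.ck1]
  exact mul_star_mul_self_of_isIdempotentElem (by rw [Q.ck1]; exact Q.proj_idem _)

lemma p_mul_se [StarModule ℂ B] [CompleteSpace B] (e : E) : Q.p (r e) * Q.se e = Q.se e :=
  mul_eq_self_of_eq_sum_mul_star ⟨Q.proj_idem _, Q.proj_star _⟩ (Q.ck2 _ ⟨e, rfl⟩)
    (Finset.mem_filter.2 ⟨Finset.mem_univ e, rfl⟩)

end CStarAlgebra

section SumOfGraphs

variable {E₁ E₂ : Type} [Fintype E₁] [Fintype E₂] {s₁ r₁ : E₁ → V} {s₂ r₂ : E₂ → V}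
  {A : Type*} [Ring A] [Algebra ℂ A] [StarRing A]

@[simps]
def restrictRight (Q : CKFamily V (E₁ ⊕ E₂) (Sum.elim s₁ s₂) (Sum.elim r₁ r₂) A)
    (hr : ∀ e₁ e₂, r₁ e₁ ≠ r₂ e₂) : CKFamily V E₂ s₂ r₂ A where
  p := Q.p
  se e := Q.se (.inr e)
  proj_idem := Q.proj_idem
  proj_star := Q.proj_star
  orth := Q.orth
  ck1 e := Q.ck1 (.inr e)
  ck2 v := fun ⟨e, he⟩ =>
    (Q.ck2 v ⟨.inr e, he⟩).trans (Finset.sum_filter_sumElim_eq_right hr ⟨e, he⟩ _)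
  sum_p := Q.sum_p

def addEdges (Q : CKFamily V E₂ s₂ r₂ A) (t : E₁ → A) (hr : ∀ e₁ e₂, r₁ e₁ ≠ r₂ e₂)
    (ht₁ : ∀ e, star (t e) * t e = Q.p (s₁ e))
    (ht₂ : ∀ v, (∃ e, r₁ e = v) →
      Q.p v = ∑ e ∈ Finset.univ.filter (fun e => r₁ e = v), t e * star (t e)) :
    CKFamily V (E₁ ⊕ E₂) (Sum.elim s₁ s₂) (Sum.elim r₁ r₂) A where
  p := Q.p
  se := Sum.elim t Q.se
  proj_idem := Q.proj_idem
  proj_star := Q.proj_star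
  orth := Q.orth
  ck1 := Sum.rec ht₁ Q.ck1
  ck2 v := by
    rintro ⟨e₁ | e₂, he⟩
    · rw [Finset.sum_filter_sumElim_eq_left hr ⟨e₁, he⟩]
      exact ht₂ v ⟨e₁, he⟩
    · rw [Finset.sum_filter_sumElim_eq_right hr ⟨e₂, he⟩]
      exact Q.ck2 v ⟨e₂, he⟩
  sum_p := Q.sum_p

end SumOfGraphs

end CKFamily

noncomputable def NonUnitalStarAlgHom.toCorner {A B : Type*} [Ring A] [Algebra ℂ A] [StarRing A]
    [NormedRing B] [StarRing B] [NormedAlgebra ℂ B] (φ : A →⋆ₙₐ[ℂ] B) {q : B}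
    (hq : IsStarProjection q) (h : φ 1 = q) : A →⋆ₐ[ℂ] hq.Corner where
  toFun a := .mk (φ a) (by rw [← h, ← map_mul, one_mul]) (by rw [← h, ← map_mul, mul_one])
  map_one' := IsStarProjection.Corner.ext h
  map_mul' a b := IsStarProjection.Corner.ext (map_mul φ a b)
  map_zero' := IsStarProjection.Corner.ext (map_zero φ)
  map_add' a b := IsStarProjection.Corner.ext (map_add φ a b)
  commutes' c := IsStarProjection.Corner.ext (by
    rw [Algebra.algebraMap_eq_smul_one, Algebra.algebraMap_eq_smul_one,
      IsStarProjection.Corner.val_mk, map_smul, h]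
    rfl)
  map_star' a := IsStarProjection.Corner.ext (map_star φ a)

namespace IsUniversalCKFamily

variable {V E : Type} [Fintype V] [Fintype E] [DecidableEq V] {s r : E → V}
  {A : Type*} [Ring A] [Algebra ℂ A] [StarRing A] {F : CKFamily V E s r A}
  {B : Type} [NormedRing B] [StarRing B] [CStarRing B] [NormedAlgebra ℂ B] [StarModule ℂ B]
  [CompleteSpace B]

lemma hom_ext (hF : IsUniversalCKFamily V E s r A F) {φ ψ : A →⋆ₐ[ℂ] B}
    (hp : ∀ v, φ (F.p v) = ψ (F.p v)) (hse : ∀ e, φ (F.se e) = ψ (F.se e)) : φ = ψ :=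
  (hF B (F.map φ)).unique ⟨fun _ => rfl, fun _ => rfl⟩
    ⟨fun v => (hp v).symm, fun e => (hse e).symm⟩

lemma nonUnitalStarAlgHom_ext (hF : IsUniversalCKFamily V E s r A F) {φ ψ : A →⋆ₙₐ[ℂ] B}
    (hp : ∀ v, φ (F.p v) = ψ (F.p v)) (hse : ∀ e, φ (F.se e) = ψ (F.se e)) : φ = ψ := by
  have hq : IsStarProjection (φ 1) := (IsStarProjection.one A).map φ
  have h1 : ψ 1 = φ 1 := by simp only [← F.sum_p, map_sum, hp]
  have := hF.hom_ext (φ := φ.toCorner hq rfl) (ψ := ψ.toCorner hq h1)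
    (fun v => IsStarProjection.Corner.ext (hp v)) (fun e => IsStarProjection.Corner.ext (hse e))
  ext a
  exact congrArg IsStarProjection.Corner.val (DFunLike.congr_fun this a)

lemma exists_nonUnitalStarAlgHom (hF : IsUniversalCKFamily V E s r A F) {q : B}
    {hq : IsStarProjection q} (Q : CKFamily V E s r hq.Corner) :
    ∃ φ : A →⋆ₙₐ[ℂ] B, (∀ v, φ (F.p v) = (Q.p v).val) ∧ ∀ e, φ (F.se e) = (Q.se e).val := by
  obtain ⟨φ, ⟨hp, hse⟩, -⟩ := hF hq.Corner Q
  exact ⟨IsStarProjection.Corner.subtype.comp φ.toNonUnitalStarAlgHom,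
    fun v => congrArg IsStarProjection.Corner.val (hp v),
    fun e => congrArg IsStarProjection.Corner.val (hse e)⟩

end IsUniversalCKFamily

section ProdLift

variable {R A B : Type*} [CommRing R] [StarRing R] [Ring A] [Algebra R A] [StarRing A]
  [Ring B] [Algebra R B] [StarRing B]

-- For unital `A`, the algebra `A × R` is the unitization of `A`; this is its universal property.
def NonUnitalStarAlgHom.prodLift [StarModule R B] (ψ : A →⋆ₙₐ[R] B) : A × R →⋆ₐ[R] B :=
  have hleft : ∀ a, (1 - ψ 1) * ψ a = 0 := fun a => by
    rw [sub_mul, one_mul, ← map_mul, one_mul, sub_self]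
  have hright : ∀ a, ψ a * (1 - ψ 1) = 0 := fun a => by
    rw [mul_sub, mul_one, ← map_mul, mul_one, sub_self]
  have hidem : (1 - ψ 1) * (1 - ψ 1) = 1 - ψ 1 := by rw [mul_sub, mul_one, hleft, sub_zero]
  { toFun := fun x => ψ x.1 + x.2 • (1 - ψ 1)
    map_one' := by simp
    map_mul' := fun x y => by
      simp only [Prod.fst_mul, Prod.snd_mul, map_mul, add_mul, mul_add, smul_mul_assoc,
        mul_smul_comm, hleft, hright, hidem, smul_zero, add_zero, zero_add, smul_smul, mul_comm]
    map_zero' := by simp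
    map_add' := fun x y => by simp only [Prod.fst_add, Prod.snd_add, map_add, add_smul]; abel
    commutes' := fun c => by simp [Algebra.algebraMap_eq_smul_one, smul_sub]
    map_star' := fun x => by
      simp only [Prod.fst_star, Prod.snd_star, star_add, star_smul, star_sub, star_one,
        ← map_star] }

lemma NonUnitalStarAlgHom.prodLift_apply [StarModule R B] (ψ : A →⋆ₙₐ[R] B) (x : A × R) :
    ψ.prodLift x = ψ x.1 + x.2 • (1 - ψ 1) :=
  rfl

lemma StarAlgHom.ext_of_comp_inl {f g : A × R →⋆ₐ[R] B}
    (h : (f : A × R →⋆ₙₐ[R] B).comp (NonUnitalStarAlgHom.inl R A R) =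
      (g : A × R →⋆ₙₐ[R] B).comp (NonUnitalStarAlgHom.inl R A R)) : f = g := by
  ext ⟨a, c⟩
  have hx : (a, c) = (a, 0) + c • (1 - (1, 0)) := by ext <;> simp
  have hf := DFunLike.congr_fun h
  simp only [NonUnitalStarAlgHom.coe_comp, Function.comp_apply, NonUnitalStarAlgHom.coe_inl,
    NonUnitalStarAlgHom.coe_coe] at hf
  rw [hx, map_add, map_add, map_smul, map_smul, map_sub, map_sub, map_one, map_one, hf, hf]

end ProdLift

lemma IsAmalgamatedFreeProduct.hom_ext {D A₁ A₂ C : Type*}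
    [Ring D] [Algebra ℂ D] [StarRing D] [Ring A₁] [Algebra ℂ A₁] [StarRing A₁]
    [Ring A₂] [Algebra ℂ A₂] [StarRing A₂] [Ring C] [Algebra ℂ C] [StarRing C]
    {θ₁ : D →⋆ₐ[ℂ] A₁} {θ₂ : D →⋆ₐ[ℂ] A₂} {i₁ : A₁ →⋆ₐ[ℂ] C} {i₂ : A₂ →⋆ₐ[ℂ] C}
    (hP : IsAmalgamatedFreeProduct θ₁ θ₂ i₁ i₂)
    {B : Type} [NormedRing B] [StarRing B] [CStarRing B] [NormedAlgebra ℂ B] [StarModule ℂ B]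
    [CompleteSpace B] {π π' : C →⋆ₐ[ℂ] B}
    (h₁ : π.comp i₁ = π'.comp i₁) (h₂ : π.comp i₂ = π'.comp i₂) : π = π' :=
  (hP.2 B (π.comp i₁) (π.comp i₂)
    (by rw [StarAlgHom.comp_assoc, hP.1, StarAlgHom.comp_assoc])).unique
    ⟨rfl, rfl⟩ ⟨h₁.symm, h₂.symm⟩

section Decomposition

variable {V : Type} {V₁ : Set V} {E₁ E₂ : Type} {s₁ r₁ : E₁ → V₁} {s₂ r₂ : E₂ → V}

lemma coe_r₁_ne_r₂ (hnoenter : ∀ e, r₂ e ∉ V₁) (e₁ : E₁) (e₂ : E₂) : (r₁ e₁ : V) ≠ r₂ e₂ :=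
  ne_of_mem_of_not_mem (r₁ e₁).2 (hnoenter e₂)

variable [Fintype V] [DecidableEq V] [DecidablePred (· ∈ V₁)] [Fintype E₁] [Fintype E₂]

@[simps]
noncomputable def CKFamily.restrictLeft {B : Type*} [NormedRing B] [StarRing B] [CStarRing B]
    [NormedAlgebra ℂ B] [StarModule ℂ B] [CompleteSpace B]
    (Q : CKFamily V (E₁ ⊕ E₂) (Sum.elim (fun e => (s₁ e : V)) s₂)
      (Sum.elim (fun e => (r₁ e : V)) r₂) B)
    (hnoenter : ∀ e, r₂ e ∉ V₁) :
    CKFamily V₁ E₁ s₁ r₁ (Q.isStarProjection_sum (Finset.univ.filter (· ∈ V₁))).Corner where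
  p v := .mk (Q.p v) (Q.sum_p_mul_of_mem (by simp) (Q.proj_idem v))
    (Q.mul_sum_p_of_mem (by simp) (Q.proj_idem v))
  se e := .mk (Q.se (.inl e)) (Q.sum_p_mul_of_mem (by simp) (Q.p_mul_se (.inl e)))
    (Q.mul_sum_p_of_mem (by simp) (Q.se_mul_p (.inl e)))
  proj_idem v := IsStarProjection.Corner.ext (by simpa using Q.proj_idem v)
  proj_star v := IsStarProjection.Corner.ext (by simpa using Q.proj_star v)
  orth v w h := IsStarProjection.Corner.ext (by simpa using Q.orth v w (Subtype.coe_injective.ne h))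
  ck1 e := IsStarProjection.Corner.ext (by simpa using Q.ck1 (.inl e))
  ck2 v := fun ⟨e, he⟩ => IsStarProjection.Corner.ext (by
    simp only [IsStarProjection.Corner.val_mk, IsStarProjection.Corner.val_sum,
      IsStarProjection.Corner.val_mul, IsStarProjection.Corner.val_star]
    rw [Q.ck2 v ⟨.inl e, congrArg Subtype.val he⟩,
      Finset.sum_filter_sumElim_eq_left (coe_r₁_ne_r₂ hnoenter) ⟨e, congrArg Subtype.val he⟩]
    simp only [Subtype.coe_inj])
  sum_p := IsStarProjection.Corner.ext (by
    simp only [IsStarProjection.Corner.val_mk, IsStarProjection.Corner.val_sum,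
      IsStarProjection.Corner.val_one]
    exact (Finset.sum_subtype _ (by simp) Q.p).symm)

variable {CA₁ CA₂ : Type} [Ring CA₁] [Algebra ℂ CA₁] [StarRing CA₁]
  [Ring CA₂] [Algebra ℂ CA₂] [StarRing CA₂]
  {F₁ : CKFamily V₁ E₁ s₁ r₁ CA₁} {F₂ : CKFamily V E₂ s₂ r₂ CA₂}
  {n : ℕ} {ι : Fin n ≃ V₁} {θ₁ : (Fin (n + 1) → ℂ) →⋆ₐ[ℂ] (CA₁ × ℂ)}
  {θ₂ : (Fin (n + 1) → ℂ) →⋆ₐ[ℂ] CA₂}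

lemma amalgam_p_eq {P : Type} [Ring P] [Algebra ℂ P] [StarRing P]
    {i₁ : (CA₁ × ℂ) →⋆ₐ[ℂ] P} {i₂ : CA₂ →⋆ₐ[ℂ] P}
    (hθ₁ : ∀ l : Fin (n + 1) → ℂ,
      θ₁ l = (∑ i : Fin n, l i.castSucc • F₁.p (ι i), l (Fin.last n)))
    (hθ₂ : ∀ l : Fin (n + 1) → ℂ,
      θ₂ l = ∑ i : Fin n, l i.castSucc • F₂.p ((ι i : V)) +
        l (Fin.last n) • ∑ v ∈ Finset.univ.filter (fun v : V => v ∉ V₁), F₂.p v)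
    (h : i₁.comp θ₁ = i₂.comp θ₂) (v : V₁) : i₁ (F₁.p v, 0) = i₂ (F₂.p v) := by
  have := DFunLike.congr_fun h (Pi.single (ι.symm v).castSucc 1)
  simpa [hθ₁, hθ₂, Pi.single_apply, Fin.castSucc_inj] using this

theorem exists_starAlgHom_amalgam_to_graphAlgebra {CG : Type} [NormedRing CG] [StarRing CG]
    [CStarRing CG] [NormedAlgebra ℂ CG] [StarModule ℂ CG] [CompleteSpace CG]
    {P : Type} [Ring P] [Algebra ℂ P] [StarRing P]
    {i₁ : (CA₁ × ℂ) →⋆ₐ[ℂ] P} {i₂ : CA₂ →⋆ₐ[ℂ] P} (hnoenter : ∀ e, r₂ e ∉ V₁)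
    (hF₁ : IsUniversalCKFamily V₁ E₁ s₁ r₁ CA₁ F₁) (hF₂ : IsUniversalCKFamily V E₂ s₂ r₂ CA₂ F₂)
    (F : CKFamily V (E₁ ⊕ E₂) (Sum.elim (fun e => (s₁ e : V)) s₂)
      (Sum.elim (fun e => (r₁ e : V)) r₂) CG)
    (hθ₁ : ∀ l : Fin (n + 1) → ℂ,
      θ₁ l = (∑ i : Fin n, l i.castSucc • F₁.p (ι i), l (Fin.last n)))
    (hθ₂ : ∀ l : Fin (n + 1) → ℂ,
      θ₂ l = ∑ i : Fin n, l i.castSucc • F₂.p ((ι i : V)) +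
        l (Fin.last n) • ∑ v ∈ Finset.univ.filter (fun v : V => v ∉ V₁), F₂.p v)
    (hP : IsAmalgamatedFreeProduct θ₁ θ₂ i₁ i₂) :
    ∃ π : P →⋆ₐ[ℂ] CG,
      (∀ v : ↥V₁, π (i₁ (F₁.p v, 0)) = F.p (v : V)) ∧
      (∀ e : E₁, π (i₁ (F₁.se e, 0)) = F.se (Sum.inl e)) ∧
      (π (i₁ (0, 1)) = ∑ v ∈ Finset.univ.filter (fun v : V => v ∉ V₁), F.p v) ∧
      (∀ v : V, π (i₂ (F₂.p v)) = F.p v) ∧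
      (∀ e : E₂, π (i₂ (F₂.se e)) = F.se (Sum.inr e)) := by
  obtain ⟨ψ, hψp, hψse⟩ := hF₁.exists_nonUnitalStarAlgHom (F.restrictLeft hnoenter)
  obtain ⟨π₂, ⟨hπ₂p, hπ₂se⟩, -⟩ := hF₂ CG (F.restrictRight (coe_r₁_ne_r₂ hnoenter))
  have hψ1 : ψ 1 = ∑ v ∈ Finset.univ.filter (· ∈ V₁), F.p v := by
    rw [← F₁.sum_p, map_sum]
    exact (Finset.sum_congr rfl fun v _ => hψp v).trans (Finset.sum_subtype _ (by simp) F.p).symm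
  obtain ⟨π, ⟨hπ₁, hπ₂⟩, -⟩ := hP.2 CG ψ.prodLift π₂ (by
    ext l
    simp [hθ₁, hθ₂, ψ.prodLift_apply, map_sum, hψp, hπ₂p, hψ1, F.one_sub_sum_filter])
  have hπi₁ : ∀ x, π (i₁ x) = ψ.prodLift x := fun x => DFunLike.congr_fun hπ₁ x
  have hπi₂ : ∀ x, π (i₂ x) = π₂ x := fun x => DFunLike.congr_fun hπ₂ x
  refine ⟨π, fun v => ?_, fun e => ?_, ?_, fun v => ?_, fun e => ?_⟩ <;>
    simp [hπi₁, hπi₂, ψ.prodLift_apply, hψp, hψse, hπ₂p, hπ₂se, hψ1, F.one_sub_sum_filter]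

theorem exists_starAlgHom_graphAlgebra_to_amalgam {CG : Type} [Ring CG] [Algebra ℂ CG]
    [StarRing CG] {P : Type} [NormedRing P] [StarRing P] [CStarRing P] [NormedAlgebra ℂ P]
    [StarModule ℂ P] [CompleteSpace P] {i₁ : (CA₁ × ℂ) →⋆ₐ[ℂ] P} {i₂ : CA₂ →⋆ₐ[ℂ] P}
    (hnoenter : ∀ e, r₂ e ∉ V₁)
    {F : CKFamily V (E₁ ⊕ E₂) (Sum.elim (fun e => (s₁ e : V)) s₂)
      (Sum.elim (fun e => (r₁ e : V)) r₂) CG}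
    (hF : IsUniversalCKFamily V (E₁ ⊕ E₂) (Sum.elim (fun e => (s₁ e : V)) s₂)
      (Sum.elim (fun e => (r₁ e : V)) r₂) CG F)
    (hv : ∀ v : V₁, i₁ (F₁.p v, 0) = i₂ (F₂.p v)) :
    ∃ ρ : CG →⋆ₐ[ℂ] P, (∀ v, ρ (F.p v) = i₂ (F₂.p v)) ∧
      (∀ e, ρ (F.se (.inl e)) = i₁ (F₁.se e, 0)) ∧ ∀ e, ρ (F.se (.inr e)) = i₂ (F₂.se e) := by
  let j : CA₁ →⋆ₙₐ[ℂ] P := (i₁ : CA₁ × ℂ →⋆ₙₐ[ℂ] P).comp (NonUnitalStarAlgHom.inl ℂ CA₁ ℂ)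
  have hj : ∀ a, j a = i₁ (a, 0) := fun _ => rfl
  obtain ⟨ρ, ⟨hp, hse⟩, -⟩ := hF P ((F₂.map i₂).addEdges (fun e => j (F₁.se e))
    (coe_r₁_ne_r₂ hnoenter)
    (fun e => by rw [← map_star, ← map_mul, F₁.ck1, hj, hv]; rfl)
    (fun v ⟨e, he⟩ => by
      subst he
      change i₂ (F₂.p (r₁ e)) = _
      rw [← hv, ← hj, F₁.map_p_eq_sum j ⟨e, rfl⟩]
      simp only [Subtype.coe_inj]))
  exact ⟨ρ, hp, fun e => hse (.inl e), fun e => hse (.inr e)⟩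

end Decomposition


theorem graph_algebra_iso_amalgam_case1_general
    (V : Type) [Fintype V] [DecidableEq V]
    (V₁ : Set V) [DecidablePred (· ∈ V₁)]
    (E₁ E₂ : Type) [Fintype E₁] [Fintype E₂]
    (s₁ r₁ : E₁ → ↥V₁) (s₂ r₂ : E₂ → V)
    (hnoenter : ∀ e : E₂, r₂ e ∉ V₁)
    -- C*(G₁)
    (CA₁ : Type) [NormedRing CA₁] [StarRing CA₁] [NormedAlgebra ℂ CA₁]
    (F₁ : CKFamily ↥V₁ E₁ s₁ r₁ CA₁) (hF₁ : IsUniversalCKFamily ↥V₁ E₁ s₁ r₁ CA₁ F₁)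
    -- C*(G₂)   (G₂ has vertex set all of V)
    (CA₂ : Type) [NormedRing CA₂] [StarRing CA₂] [NormedAlgebra ℂ CA₂]
    (F₂ : CKFamily V E₂ s₂ r₂ CA₂) (hF₂ : IsUniversalCKFamily V E₂ s₂ r₂ CA₂ F₂)
    -- C*(G)
    (CG : Type) [NormedRing CG] [StarRing CG] [CStarRing CG]
    [NormedAlgebra ℂ CG] [StarModule ℂ CG] [CompleteSpace CG]
    (F : CKFamily V (E₁ ⊕ E₂) (Sum.elim (fun e => (s₁ e : V)) s₂)
      (Sum.elim (fun e => (r₁ e : V)) r₂) CG)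
    (hF : IsUniversalCKFamily V (E₁ ⊕ E₂) (Sum.elim (fun e => (s₁ e : V)) s₂)
      (Sum.elim (fun e => (r₁ e : V)) r₂) CG F)
    -- the amalgamation data over ℂ^{n+1}
    (n : ℕ) (ι : Fin n ≃ ↥V₁)
    (θ₁ : (Fin (n + 1) → ℂ) →⋆ₐ[ℂ] (CA₁ × ℂ))
    (hθ₁ : ∀ l : Fin (n + 1) → ℂ,
      θ₁ l = (∑ i : Fin n, l i.castSucc • F₁.p (ι i), l (Fin.last n)))
    (θ₂ : (Fin (n + 1) → ℂ) →⋆ₐ[ℂ] CA₂)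
    (hθ₂ : ∀ l : Fin (n + 1) → ℂ,
      θ₂ l = ∑ i : Fin n, l i.castSucc • F₂.p ((ι i : V)) +
        l (Fin.last n) • ∑ v ∈ Finset.univ.filter (fun v : V => v ∉ V₁), F₂.p v)
    -- the amalgamated free product  (C*(G₁) ⊕ ℂ) *_{ℂ^{n+1}} C*(G₂)
    (P : Type) [NormedRing P] [StarRing P] [CStarRing P] [NormedAlgebra ℂ P]
    [StarModule ℂ P] [CompleteSpace P]
    (i₁ : (CA₁ × ℂ) →⋆ₐ[ℂ] P) (i₂ : CA₂ →⋆ₐ[ℂ] P)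
    (hP : IsAmalgamatedFreeProduct θ₁ θ₂ i₁ i₂) :
    ∃ φ : P ≃⋆ₐ[ℂ] CG,
      (∀ v : ↥V₁, φ (i₁ (F₁.p v, 0)) = F.p (v : V)) ∧
      (∀ e : E₁, φ (i₁ (F₁.se e, 0)) = F.se (Sum.inl e)) ∧
      (φ (i₁ (0, 1)) = ∑ v ∈ Finset.univ.filter (fun v : V => v ∉ V₁), F.p v) ∧
      (∀ v : V, φ (i₂ (F₂.p v)) = F.p v) ∧
      (∀ e : E₂, φ (i₂ (F₂.se e)) = F.se (Sum.inr e)) := by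
  obtain ⟨π, hπp₁, hπse₁, hπc, hπp₂, hπse₂⟩ :=
    exists_starAlgHom_amalgam_to_graphAlgebra hnoenter hF₁ hF₂ F hθ₁ hθ₂ hP
  have hv := amalgam_p_eq hθ₁ hθ₂ hP.1
  obtain ⟨ρ, hρp, hρse₁, hρse₂⟩ := exists_starAlgHom_graphAlgebra_to_amalgam hnoenter hF hv
  have hπρ : π.comp ρ = .id ℂ CG := by
    refine hF.hom_ext (fun v => ?_) (Sum.rec (fun e => ?_) (fun e => ?_)) <;>
      simp [hρp, hρse₁, hρse₂, hπp₂, hπse₁, hπse₂]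
  have hρπ : ρ.comp π = .id ℂ P := by
    refine hP.hom_ext
      (StarAlgHom.ext_of_comp_inl (hF₁.nonUnitalStarAlgHom_ext (fun v => ?_) (fun e => ?_)))
      (hF₂.hom_ext (fun v => ?_) (fun e => ?_)) <;>
      simp [hπse₁, hπp₂, hπse₂, hρp, hρse₁, hρse₂, hv]
  exact ⟨.ofStarAlgHom π ρ hρπ hπρ, hπp₁, hπse₁, hπc, hπp₂, hπse₂⟩

/-- Let `G = G₁ ∪ G₂` with finitely many vertices, where `G₁` has vertex set
`V₁` and `G₂` has all vertices of `G` (`G₂⁰ = G⁰`), the edge sets `E₁, E₂` are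
disjoint, no edge of `G₂` enters `G₁`, and the shared vertex set `V₁` has `n`
elements.  Then `C*(G) ≅ (C*(G₁) ⊕ ℂ) *_{ℂ^{n+1}} C*(G₂)`, where the
amalgamation is via the unital embeddings
`θ₁(λ₁,...,λ_{n+1}) = (Σᵢ λᵢ p̄ᵢ, λ_{n+1})` and
`θ₂(λ₁,...,λ_{n+1}) = Σᵢ λᵢ p̿ᵢ + λ_{n+1} Σ_β p̿_β`. -/
theorem graph_algebra_iso_amalgam_case1
    (V : Type) [Fintype V] [DecidableEq V]
    (V₁ : Set V) [DecidablePred (· ∈ V₁)]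
    (E₁ E₂ : Type) [Fintype E₁] [Fintype E₂]
    (s₁ r₁ : E₁ → ↥V₁) (s₂ r₂ : E₂ → V)
    (hnoenter : ∀ e : E₂, r₂ e ∉ V₁)
    -- C*(G₁)
    (CA₁ : Type) [NormedRing CA₁] [StarRing CA₁] [CStarRing CA₁]
    [NormedAlgebra ℂ CA₁] [StarModule ℂ CA₁] [CompleteSpace CA₁]
    (F₁ : CKFamily ↥V₁ E₁ s₁ r₁ CA₁) (hF₁ : IsUniversalCKFamily ↥V₁ E₁ s₁ r₁ CA₁ F₁)
    -- C*(G₂)   (G₂ has vertex set all of V)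
    (CA₂ : Type) [NormedRing CA₂] [StarRing CA₂] [CStarRing CA₂]
    [NormedAlgebra ℂ CA₂] [StarModule ℂ CA₂] [CompleteSpace CA₂]
    (F₂ : CKFamily V E₂ s₂ r₂ CA₂) (hF₂ : IsUniversalCKFamily V E₂ s₂ r₂ CA₂ F₂)
    -- C*(G)
    (CG : Type) [NormedRing CG] [StarRing CG] [CStarRing CG]
    [NormedAlgebra ℂ CG] [StarModule ℂ CG] [CompleteSpace CG]
    (F : CKFamily V (E₁ ⊕ E₂) (Sum.elim (fun e => (s₁ e : V)) s₂)
      (Sum.elim (fun e => (r₁ e : V)) r₂) CG)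
    (hF : IsUniversalCKFamily V (E₁ ⊕ E₂) (Sum.elim (fun e => (s₁ e : V)) s₂)
      (Sum.elim (fun e => (r₁ e : V)) r₂) CG F)
    -- the amalgamation data over ℂ^{n+1}
    (n : ℕ) (ι : Fin n ≃ ↥V₁)
    (θ₁ : (Fin (n + 1) → ℂ) →⋆ₐ[ℂ] (CA₁ × ℂ))
    (hθ₁ : ∀ l : Fin (n + 1) → ℂ,
      θ₁ l = (∑ i : Fin n, l i.castSucc • F₁.p (ι i), l (Fin.last n)))
    (θ₂ : (Fin (n + 1) → ℂ) →⋆ₐ[ℂ] CA₂)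
    (hθ₂ : ∀ l : Fin (n + 1) → ℂ,
      θ₂ l = ∑ i : Fin n, l i.castSucc • F₂.p ((ι i : V)) +
        l (Fin.last n) • ∑ v ∈ Finset.univ.filter (fun v : V => v ∉ V₁), F₂.p v)
    -- the amalgamated free product  (C*(G₁) ⊕ ℂ) *_{ℂ^{n+1}} C*(G₂)
    (P : Type) [NormedRing P] [StarRing P] [CStarRing P] [NormedAlgebra ℂ P]
    [StarModule ℂ P] [CompleteSpace P]
    (i₁ : (CA₁ × ℂ) →⋆ₐ[ℂ] P) (i₂ : CA₂ →⋆ₐ[ℂ] P)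
    (hP : IsAmalgamatedFreeProduct θ₁ θ₂ i₁ i₂) :
    ∃ φ : P ≃⋆ₐ[ℂ] CG,
      (∀ v : ↥V₁, φ (i₁ (F₁.p v, 0)) = F.p (v : V)) ∧
      (∀ e : E₁, φ (i₁ (F₁.se e, 0)) = F.se (Sum.inl e)) ∧
      (φ (i₁ (0, 1)) = ∑ v ∈ Finset.univ.filter (fun v : V => v ∉ V₁), F.p v) ∧
      (∀ v : V, φ (i₂ (F₂.p v)) = F.p v) ∧
      (∀ e : E₂, φ (i₂ (F₂.se e)) = F.se (Sum.inr e)) :=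
  graph_algebra_iso_amalgam_case1_general V V₁ E₁ E₂ s₁ r₁ s₂ r₂ hnoenter CA₁ F₁ hF₁ CA₂ F₂ hF₂ CG F
    hF n ι θ₁ hθ₁ θ₂ hθ₂ P i₁ i₂ hP
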